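/- Fix K > 0 and j ∈ {1,2,3}, and let c̃, s̃ be the ultradiscrete elliptic functions. For every v ∈ ℝ, the two identities c̃(u+v) = max(c̃(u)+s̃(u)+2c̃(v), s̃(v)) − max(s̃(u)+2s̃(v), 2c̃(u)+c̃(v)) and s̃(u+v) = max(c̃(u), 2s̃(u)+c̃(v)+s̃(v)) − max(s̃(u)+2s̃(v), 2c̃(u)+c̃(v)) hold for all u ∈ [(j−1)K, jK] if and only if (v − (j−1)K) mod 3K ∈ [0, K] ∪ [2K, 3K). -/

import Mathlib

/-!
Shifting the argument by `K` acts linearly on the pair `(c̃, s̃)`: `c̃ (u + K) = -s̃ u` and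
`s̃ (u + K) = c̃ u - s̃ u`, because `c̃` and `s̃` are differences of translates of the single
`3K`-periodic function `x ↦ (9K/2) (fract (x / 3K) - 1/2)²`. Under this substitution the three
max-plus expressions of the addition formulae are permuted cyclically, up to the common shift
`2 (s̃ u + s̃ v)`, so the formulae hold at `(u + K, v + K)` iff they hold at `(u, v)`. With the
`3K`-periodicity in `v` this reduces every `j` to `j = 1` and `v ∈ [0, 3K)`, where `c̃` and `s̃`
are affine on the pieces of length `K`: the formulae hold for `v ∈ [0, K] ∪ [2K, 3K)` and fail at
`u = K/2` for `v ∈ (K, 2K)`.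
-/

/-- The ultradiscrete elliptic function `c̃`. -/
noncomputable def ctilde (K u : ℝ) : ℝ :=
  -(9 * K / 2) * (Int.fract ((u - K) / (3 * K)) - 1 / 2) ^ 2
    + (9 * K / 2) * (Int.fract (u / (3 * K)) - 1 / 2) ^ 2

/-- The ultradiscrete elliptic function `s̃`. -/
noncomputable def stilde (K u : ℝ) : ℝ :=
  -(9 * K / 2) * (Int.fract ((u - 2 * K) / (3 * K)) - 1 / 2) ^ 2
    + (9 * K / 2) * (Int.fract (u / (3 * K)) - 1 / 2) ^ 2

/-- The real number `x` reduced modulo `y`, i.e. `x − y⌊x/y⌋`. -/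
noncomputable def rmod (x y : ℝ) : ℝ := x - y * ⌊x / y⌋

open Set

-- The closed right endpoint is allowed since `(fract x - 1/2)²` is continuous.
lemma sq_fract_div_sub_half {x y : ℝ} (hy : 0 < y) (n : ℤ) (h₀ : n * y ≤ x)
    (h₁ : x ≤ (n + 1) * y) : (Int.fract (x / y) - 1 / 2) ^ 2 = (x / y - n - 1 / 2) ^ 2 := by
  rw [← le_div_iff₀ hy] at h₀
  rw [← div_le_iff₀ hy] at h₁
  rcases h₁.lt_or_eq with h₁ | h₁
  · rw [← Int.self_sub_floor, Int.floor_eq_iff.2 ⟨h₀, h₁⟩]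
  · rw [h₁, show (n : ℝ) + 1 = ((n + 1 : ℤ) : ℝ) by push_cast; ring, Int.fract_intCast]
    push_cast
    ring

lemma ctilde_add_K (K u : ℝ) : ctilde K (u + K) = -stilde K u := by
  rcases eq_or_ne K 0 with rfl | hK
  · simp [ctilde, stilde]
  have : (u + K) / (3 * K) = (u - 2 * K) / (3 * K) + 1 := by field_simp; ring
  simp only [ctilde, stilde, add_sub_cancel_right, this, Int.fract_add_one]
  ring

lemma stilde_add_K (K u : ℝ) : stilde K (u + K) = ctilde K u - stilde K u := by
  rcases eq_or_ne K 0 with rfl | hK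
  · simp [ctilde, stilde]
  have h₁ : (u + K - 2 * K) / (3 * K) = (u - K) / (3 * K) := by ring_nf
  have h₂ : (u + K) / (3 * K) = (u - 2 * K) / (3 * K) + 1 := by field_simp; ring
  simp only [ctilde, stilde, h₁, h₂, Int.fract_add_one]
  ring

lemma ctilde_periodic (K : ℝ) : Function.Periodic (ctilde K) (3 * K) := fun u => by
  rw [show u + 3 * K = u + K + K + K by ring]
  simp only [ctilde_add_K, stilde_add_K]
  ring

lemma stilde_periodic (K : ℝ) : Function.Periodic (stilde K) (3 * K) := fun u => by
  rw [show u + 3 * K = u + K + K + K by ring]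
  simp only [ctilde_add_K, stilde_add_K]
  ring

section AdditionFormulae

variable (c s c' s' : ℝ)

def additionDen : ℝ := max (s + 2 * s') (2 * c + c')

def additionNumC : ℝ := max (c + s + 2 * c') s'

def additionNumS : ℝ := max c (2 * s + c' + s')

lemma additionDen_rotate :
    additionDen (-s) (c - s) (-s') (c' - s') = additionNumC c s c' s' - 2 * (s + s') := by
  rw [additionDen, additionNumC, ← max_sub_sub_right]; congr 1 <;> ring

lemma additionNumC_rotate :
    additionNumC (-s) (c - s) (-s') (c' - s') = additionNumS c s c' s' - 2 * (s + s') := by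
  rw [additionNumC, additionNumS, ← max_sub_sub_right]; congr 1 <;> ring

lemma additionNumS_rotate :
    additionNumS (-s) (c - s) (-s') (c' - s') = additionDen c s c' s' - 2 * (s + s') := by
  rw [additionNumS, additionDen, ← max_sub_sub_right]; congr 1 <;> ring

end AdditionFormulae

def SecondAdditionPair (K u v : ℝ) : Prop :=
  ctilde K (u + v) = additionNumC (ctilde K u) (stilde K u) (ctilde K v) (stilde K v)
      - additionDen (ctilde K u) (stilde K u) (ctilde K v) (stilde K v) ∧
  stilde K (u + v) = additionNumS (ctilde K u) (stilde K u) (ctilde K v) (stilde K v)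
      - additionDen (ctilde K u) (stilde K u) (ctilde K v) (stilde K v)

lemma secondAdditionPair_add_K_add_K (K u v : ℝ) :
    SecondAdditionPair K (u + K) (v + K) ↔ SecondAdditionPair K u v := by
  simp only [SecondAdditionPair, show u + K + (v + K) = u + v + K + K by ring, ctilde_add_K,
    stilde_add_K, additionDen_rotate, additionNumC_rotate, additionNumS_rotate]
  constructor <;> rintro ⟨h₁, h₂⟩ <;> constructor <;> linarith

lemma secondAdditionPair_add_int_mul_add_int_mul (K u v : ℝ) (n : ℤ) :
    SecondAdditionPair K (u + n * K) (v + n * K) ↔ SecondAdditionPair K u v := by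
  induction n using Int.induction_on with
  | zero => simp
  | succ n ih =>
    rw [← ih, ← secondAdditionPair_add_K_add_K K (u + (n : ℤ) * K)]
    push_cast
    ring_nf
  | pred n ih =>
    rw [← ih, ← secondAdditionPair_add_K_add_K K (u + (-n - 1 : ℤ) * K)]
    push_cast
    ring_nf

lemma secondAdditionPair_add_int_mul_period (K u v : ℝ) (n : ℤ) :
    SecondAdditionPair K u (v + n * (3 * K)) ↔ SecondAdditionPair K u v := by
  simp only [SecondAdditionPair, ← add_assoc, (ctilde_periodic K).int_mul n _,
    (stilde_periodic K).int_mul n _]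

section FirstPiece

variable {K t r : ℝ}

lemma ctilde_of_mem_Icc (hK : 0 < K) (ht : t ∈ Icc 0 K) : ctilde K t = K - 2 * t := by
  obtain ⟨ht₀, ht₁⟩ := ht
  rw [ctilde, sq_fract_div_sub_half (by positivity) (-1) (by push_cast; linarith)
    (by push_cast; linarith), sq_fract_div_sub_half (by positivity) 0 (by push_cast; linarith)
    (by push_cast; linarith)]
  field_simp
  ring

lemma stilde_of_mem_Icc (hK : 0 < K) (ht : t ∈ Icc 0 K) : stilde K t = K - t := by
  obtain ⟨ht₀, ht₁⟩ := ht
  rw [stilde, sq_fract_div_sub_half (by positivity) (-1) (by push_cast; linarith)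
    (by push_cast; linarith), sq_fract_div_sub_half (by positivity) 0 (by push_cast; linarith)
    (by push_cast; linarith)]
  field_simp
  ring

lemma secondAdditionPair_of_mem_Icc (hK : 0 < K) (ht : t ∈ Icc 0 K) (hr : r ∈ Icc 0 K) :
    SecondAdditionPair K t r := by
  rcases le_total (t + r) K with h | h
  · have hx : t + r ∈ Icc 0 K := ⟨by linarith [ht.1, hr.1], h⟩
    simp only [SecondAdditionPair, additionNumC, additionNumS, additionDen,
      ctilde_of_mem_Icc hK, stilde_of_mem_Icc hK, ht, hr, hx, max_def]
    refine ⟨?_, ?_⟩ <;> split_ifs <;> linarith [ht.1, ht.2, hr.1, hr.2]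
  · have hx : t + r - K ∈ Icc 0 K := ⟨by linarith, by linarith [ht.2, hr.2]⟩
    rw [SecondAdditionPair, show t + r = t + r - K + K by ring]
    simp only [additionNumC, additionNumS, additionDen, ctilde_add_K, stilde_add_K,
      ctilde_of_mem_Icc hK, stilde_of_mem_Icc hK, ht, hr, hx, max_def]
    refine ⟨?_, ?_⟩ <;> split_ifs <;> linarith [ht.1, ht.2, hr.1, hr.2]

lemma secondAdditionPair_add_two_mul_of_mem_Icc (hK : 0 < K) (ht : t ∈ Icc 0 K)
    (hr : r ∈ Icc 0 K) : SecondAdditionPair K t (r + 2 * K) := by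
  rw [SecondAdditionPair, show r + 2 * K = r + K + K by ring]
  rcases le_total (t + r) K with h | h
  · have hx : t + r ∈ Icc 0 K := ⟨by linarith [ht.1, hr.1], h⟩
    rw [show t + (r + K + K) = t + r + K + K by ring]
    simp only [additionNumC, additionNumS, additionDen, ctilde_add_K, stilde_add_K,
      ctilde_of_mem_Icc hK, stilde_of_mem_Icc hK, ht, hr, hx, max_def]
    refine ⟨?_, ?_⟩ <;> split_ifs <;> linarith [ht.1, ht.2, hr.1, hr.2]
  · have hx : t + r - K ∈ Icc 0 K := ⟨by linarith, by linarith [ht.2, hr.2]⟩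
    rw [show t + (r + K + K) = t + r - K + K + K + K by ring]
    simp only [additionNumC, additionNumS, additionDen, ctilde_add_K, stilde_add_K,
      ctilde_of_mem_Icc hK, stilde_of_mem_Icc hK, ht, hr, hx, max_def]
    refine ⟨?_, ?_⟩ <;> split_ifs <;> linarith [ht.1, ht.2, hr.1, hr.2]

lemma not_secondAdditionPair_half_add (hK : 0 < K) (hr : r ∈ Ioo 0 K) :
    ¬ SecondAdditionPair K (K / 2) (r + K) := by
  have hK2 : K / 2 ∈ Icc 0 K := ⟨by linarith, by linarith⟩
  have hr' : r ∈ Icc 0 K := Ioo_subset_Icc_self hr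
  rw [SecondAdditionPair]
  rintro ⟨hc, hs⟩
  rcases le_total r (K / 2) with h | h
  · have hx : K / 2 + r ∈ Icc 0 K := ⟨by linarith [hr.1], by linarith⟩
    rw [show K / 2 + (r + K) = K / 2 + r + K by ring] at hc hs
    simp only [additionNumC, additionNumS, additionDen, ctilde_add_K, stilde_add_K,
      ctilde_of_mem_Icc hK, stilde_of_mem_Icc hK, hK2, hr', hx, max_def] at hc hs
    split_ifs at hc hs <;> linarith [hr.1, hr.2]
  · have hx : r - K / 2 ∈ Icc 0 K := ⟨by linarith, by linarith [hr.2]⟩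
    rw [show K / 2 + (r + K) = r - K / 2 + K + K by ring] at hc hs
    simp only [additionNumC, additionNumS, additionDen, ctilde_add_K, stilde_add_K,
      ctilde_of_mem_Icc hK, stilde_of_mem_Icc hK, hK2, hr', hx, max_def] at hc hs
    split_ifs at hc hs <;> linarith [hr.1, hr.2]

lemma forall_Icc_zero_secondAdditionPair_iff (hK : 0 < K) {w : ℝ} (hw : w ∈ Ico 0 (3 * K)) :
    (∀ t ∈ Icc 0 K, SecondAdditionPair K t w) ↔ w ∈ Icc 0 K ∪ Ico (2 * K) (3 * K) := by
  obtain ⟨hw₀, hw₃⟩ := hw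
  constructor
  · intro H
    by_contra hw
    have hr : w - K ∈ Ioo 0 K := by
      simp only [mem_union, mem_Icc, mem_Ico, hw₀, hw₃, true_and, and_true, not_or,
        not_le] at hw
      constructor <;> linarith
    refine not_secondAdditionPair_half_add hK hr ?_
    rw [sub_add_cancel]
    exact H (K / 2) ⟨by linarith, by linarith⟩
  · rintro (hw | ⟨hw₂, -⟩) t ht
    · exact secondAdditionPair_of_mem_Icc hK ht hw
    · simpa using secondAdditionPair_add_two_mul_of_mem_Icc hK ht
        (r := w - 2 * K) ⟨by linarith, by linarith⟩

end FirstPiece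

lemma forall_Icc_secondAdditionPair_add_int_mul_iff (K w : ℝ) (m : ℤ) :
    (∀ u ∈ Icc (m * K) (m * K + K), SecondAdditionPair K u (w + m * K)) ↔
      ∀ t ∈ Icc 0 K, SecondAdditionPair K t w := by
  constructor
  · intro H t ⟨ht₀, ht₁⟩
    rw [← secondAdditionPair_add_int_mul_add_int_mul K t w m]
    exact H _ ⟨by linarith, by linarith⟩
  · intro H u ⟨hu₀, hu₁⟩
    rw [← sub_add_cancel u (m * K), secondAdditionPair_add_int_mul_add_int_mul]
    exact H _ ⟨by linarith, by linarith⟩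

lemma rmod_mem_Ico (x : ℝ) {y : ℝ} (hy : 0 < y) : rmod x y ∈ Ico 0 y := by
  rw [rmod, mul_comm]
  exact ⟨Int.sub_floor_div_mul_nonneg x hy, Int.sub_floor_div_mul_lt x hy⟩

theorem ultradiscrete_addition_second_pair_general (K : ℝ) (hK : 0 < K)
    (j : ℕ) (v : ℝ) :
    (∀ u ∈ Set.Icc (((j : ℝ) - 1) * K) ((j : ℝ) * K),
      ctilde K (u + v) =
        max (ctilde K u + stilde K u + 2 * ctilde K v) (stilde K v)
          - max (stilde K u + 2 * stilde K v) (2 * ctilde K u + ctilde K v) ∧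
      stilde K (u + v) =
        max (ctilde K u) (2 * stilde K u + ctilde K v + stilde K v)
          - max (stilde K u + 2 * stilde K v) (2 * ctilde K u + ctilde K v))
    ↔ rmod (v - ((j : ℝ) - 1) * K) (3 * K) ∈
        Set.Icc 0 K ∪ Set.Ico (2 * K) (3 * K) := by
  obtain ⟨m, hm⟩ : ∃ m : ℤ, (j : ℝ) - 1 = m := ⟨j - 1, by push_cast; ring⟩
  rw [show (j : ℝ) * K = ((j : ℝ) - 1) * K + K by ring, hm]
  set w := rmod (v - m * K) (3 * K)
  have hv : v = w + m * K + ⌊(v - m * K) / (3 * K)⌋ * (3 * K) := by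
    simp only [w, rmod]
    ring
  rw [← forall_Icc_zero_secondAdditionPair_iff hK (rmod_mem_Ico _ (by positivity)),
    ← forall_Icc_secondAdditionPair_add_int_mul_iff K w m]
  change (∀ u ∈ _, SecondAdditionPair K u v) ↔ _
  rw [hv]
  simp only [secondAdditionPair_add_int_mul_period]

/-- Second pair of ultradiscrete addition formulae: valid on `[(j−1)K, jK]`
exactly when `v` lies in the closure of `D_j ∪ D_{j+2}` modulo `3K`. -/
theorem ultradiscrete_addition_second_pair (K : ℝ) (hK : 0 < K)
    (j : ℕ) (hj : j = 1 ∨ j = 2 ∨ j = 3) (v : ℝ) :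
    (∀ u ∈ Set.Icc (((j : ℝ) - 1) * K) ((j : ℝ) * K),
      ctilde K (u + v) =
        max (ctilde K u + stilde K u + 2 * ctilde K v) (stilde K v)
          - max (stilde K u + 2 * stilde K v) (2 * ctilde K u + ctilde K v) ∧
      stilde K (u + v) =
        max (ctilde K u) (2 * stilde K u + ctilde K v + stilde K v)
          - max (stilde K u + 2 * stilde K v) (2 * ctilde K u + ctilde K v))
    ↔ rmod (v - ((j : ℝ) - 1) * K) (3 * K) ∈
        Set.Icc 0 K ∪ Set.Ico (2 * K) (3 * K) :=
  ultradiscrete_addition_second_pair_general K hK j v
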